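/- Fix an integer N > 1. Let S₁ and S₂ be KdV subsets such that S₁ + 1 ⊆ S₂, and let A be the leading term of S₁. Then S₂ is a mutation of S₁: there exists a ∈ A such that S₂ = S₁[a] = {a+1−N} ∪ (S₁+1). -/

import Mathlib

/-- A subset `S ⊆ ℤ` is of virtual cardinal zero if both `S \ ℤ≥0` and `ℤ≥0 \ S`
are finite and have the same cardinality. -/
def VirtualCardZero (S : Set ℤ) : Prop :=
  (S \ {n : ℤ | 0 ≤ n}).Finite ∧ ({n : ℤ | 0 ≤ n} \ S).Finite ∧
    (S \ {n : ℤ | 0 ≤ n}).ncard = ({n : ℤ | 0 ≤ n} \ S).ncard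

/-- The shift `S + k = {s + k : s ∈ S}` of a set of integers. -/
def shiftSet (S : Set ℤ) (k : ℤ) : Set ℤ := (fun s => s + k) '' S

/-- A KdV subset (for a fixed `N`): a subset `S ⊆ ℤ` of virtual cardinal zero
such that `S + N ⊆ S`. -/
def IsKdV (N : ℕ) (S : Set ℤ) : Prop :=
  VirtualCardZero S ∧ shiftSet S N ⊆ S

/-- `A` is the leading term of the KdV subset `S`: `A` is an `N`-element set with
`S = A ∪ (S+N)` and `A ∩ (S+N) = ∅`. -/
def IsLeadingTerm (N : ℕ) (S : Set ℤ) (A : Finset ℤ) : Prop :=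
  A.card = N ∧ (↑A : Set ℤ) ∪ shiftSet S N = S ∧ (↑A : Set ℤ) ∩ shiftSet S N = ∅

/-- The mutation `S[a] = {a+1−N} ∪ (S+1)` of a KdV subset `S` at an element `a`
of its leading term. -/
def mutate (N : ℕ) (S : Set ℤ) (a : ℤ) : Set ℤ :=
  {a + 1 - (N : ℤ)} ∪ shiftSet S 1

/-!
Measure a set `S ⊆ ℤ` commensurable with `ℕ` by its index `#(S \ ℕ) - #(ℕ \ S)`: virtual cardinal
zero means index `0`, shifting by `1` lowers the index by `1`, and for `T ⊆ S` the index drops by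
`#(S \ T)`. Hence `S₂ \ (S₁ + 1)` is a single point `b`. Since `b + N ∈ S₂` and `b + N ≠ b`,
the point `a = b + N - 1` lies in `S₁`, while `a - N = b - 1 ∉ S₁`; so `a` is in the leading term,
and `S₂ = {b} ∪ (S₁ + 1) = S₁[a]`.
-/

open Set Function

/-- Only meaningful when both differences are finite, as `ncard` is `0` on infinite sets. -/
noncomputable def relIndex {α : Type*} (R S : Set α) : ℤ := (S \ R).ncard - (R \ S).ncard

section relIndex

variable {α : Type*}

lemma relIndex_swap (R S : Set α) : relIndex S R = -relIndex R S := by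
  simp only [relIndex]; ring

lemma ncard_sdiff_eq_relIndex_sub {R S T : Set α} (hTS : T ⊆ S) (hS : (S \ R).Finite)
    (hT : (R \ T).Finite) : ((S \ T).ncard : ℤ) = relIndex R S - relIndex R T := by
  have hST : (S \ T).Finite := (hS.union hT).subset (sdiff_triangle S R T)
  have h₁ := ncard_inter_add_ncard_sdiff_eq_ncard (S \ R) T hS
  have h₂ := ncard_inter_add_ncard_sdiff_eq_ncard (R \ T) S hT
  have h₃ := ncard_inter_add_ncard_sdiff_eq_ncard (S \ T) R hST
  rw [show S \ R ∩ T = T \ R by ext; simp only [mem_inter_iff, mem_sdiff]; grind,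
    sdiff_right_comm] at h₁
  rw [show R \ T ∩ S = S \ T ∩ R by ext; simp only [mem_inter_iff, mem_sdiff]; tauto,
    show (R \ T) \ S = R \ S by rw [sdiff_sdiff_left, sup_eq_right.mpr hTS]] at h₂
  simp only [relIndex]
  omega

lemma relIndex_image {β : Type*} {f : α → β} (hf : Injective f) (R S : Set α) :
    relIndex (f '' R) (f '' S) = relIndex R S := by
  simp only [relIndex, ← image_sdiff hf, ncard_image_of_injective _ hf]

end relIndex

lemma mem_shiftSet {S : Set ℤ} {k x : ℤ} : x ∈ shiftSet S k ↔ x - k ∈ S := by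
  simp [shiftSet, ← sub_eq_add_neg]

lemma shiftSet_sdiff (S T : Set ℤ) (k : ℤ) : shiftSet (S \ T) k = shiftSet S k \ shiftSet T k :=
  image_sdiff (add_left_injective k) S T

lemma nonneg_sdiff_shiftSet_one : {n : ℤ | 0 ≤ n} \ shiftSet {n : ℤ | 0 ≤ n} 1 = {0} := by
  ext; simp only [mem_sdiff, mem_ofPred_eq, mem_shiftSet, mem_singleton_iff]; omega

lemma finite_nonneg_sdiff_shiftSet_one {S : Set ℤ} (h : ({n : ℤ | 0 ≤ n} \ S).Finite) :
    ({n : ℤ | 0 ≤ n} \ shiftSet S 1).Finite := by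
  have := sdiff_triangle {n : ℤ | 0 ≤ n} (shiftSet {n : ℤ | 0 ≤ n} 1) (shiftSet S 1)
  rw [nonneg_sdiff_shiftSet_one, ← shiftSet_sdiff] at this
  exact ((finite_singleton 0).union (h.image _)).subset this

lemma relIndex_shiftSet_one {S : Set ℤ} (h₁ : (S \ {n : ℤ | 0 ≤ n}).Finite)
    (h₂ : ({n : ℤ | 0 ≤ n} \ S).Finite) :
    relIndex {n : ℤ | 0 ≤ n} (shiftSet S 1) = relIndex {n : ℤ | 0 ≤ n} S - 1 := by
  set P := {n : ℤ | 0 ≤ n}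
  have hP : shiftSet P 1 ⊆ P := fun x ↦ by simp only [P, mem_shiftSet, mem_ofPred_eq]; omega
  have hS : (shiftSet S 1 \ shiftSet P 1).Finite := shiftSet_sdiff S P 1 ▸ h₁.image _
  have key := ncard_sdiff_eq_relIndex_sub hP (finite_nonneg_sdiff_shiftSet_one h₂) hS
  have hshift : relIndex (shiftSet P 1) (shiftSet S 1) = relIndex P S :=
    relIndex_image (add_left_injective 1) P S
  rw [nonneg_sdiff_shiftSet_one, ncard_singleton, relIndex_swap P, relIndex_swap (shiftSet P 1),
    hshift] at key
  omega

lemma VirtualCardZero.relIndex_eq_zero {S : Set ℤ} (h : VirtualCardZero S) :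
    relIndex {n : ℤ | 0 ≤ n} S = 0 := by
  simp only [relIndex, h.2.2, sub_self]

lemma exists_sdiff_shiftSet_one_eq_singleton {S₁ S₂ : Set ℤ} (h₁ : VirtualCardZero S₁)
    (h₂ : VirtualCardZero S₂) (hsub : shiftSet S₁ 1 ⊆ S₂) :
    ∃ b, S₂ \ shiftSet S₁ 1 = {b} := by
  have key := ncard_sdiff_eq_relIndex_sub hsub h₂.1 (finite_nonneg_sdiff_shiftSet_one h₁.2.1)
  rw [relIndex_shiftSet_one h₁.1 h₁.2.1, h₁.relIndex_eq_zero, h₂.relIndex_eq_zero] at key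
  exact ncard_eq_one.mp (by omega)

lemma IsLeadingTerm.mem {N : ℕ} {S : Set ℤ} {A : Finset ℤ} (hA : IsLeadingTerm N S A) {x : ℤ}
    (hx : x ∈ S) (hxN : x - N ∉ S) : x ∈ A := by
  rw [← hA.2.1] at hx
  exact hx.resolve_right (fun h ↦ hxN (mem_shiftSet.mp h))

/-- Fix `N > 1`.  Let `S₁, S₂` be KdV subsets with `S₁ + 1 ⊆ S₂`,
and let `A` be the leading term of `S₁`.  Then `S₂` is a mutation of `S₁`: there is
`a ∈ A` with `S₂ = S₁[a] = {a+1−N} ∪ (S₁+1)`. -/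
theorem kdv_step_is_mutation (N : ℕ) (hN : 1 < N) (S₁ S₂ : Set ℤ)
    (hS₁ : IsKdV N S₁) (hS₂ : IsKdV N S₂) (hsub : shiftSet S₁ 1 ⊆ S₂)
    (A : Finset ℤ) (hA : IsLeadingTerm N S₁ A) :
    ∃ a ∈ A, S₂ = mutate N S₁ a := by
  obtain ⟨b, hb⟩ := exists_sdiff_shiftSet_one_eq_singleton hS₁.1 hS₂.1 hsub
  obtain ⟨hb₂, hb₁⟩ : b ∈ S₂ \ shiftSet S₁ 1 := hb ▸ rfl
  have hbN : b + N ∈ shiftSet S₁ 1 := by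
    by_contra h
    have : b + N ∈ S₂ \ shiftSet S₁ 1 := ⟨hS₂.2 ⟨b, hb₂, rfl⟩, h⟩
    rw [hb, mem_singleton_iff] at this
    omega
  refine ⟨b + N - 1, hA.mem ?_ ?_, ?_⟩
  · simpa [mem_shiftSet] using hbN
  · rwa [sub_right_comm, add_sub_cancel_right, ← mem_shiftSet]
  · rw [mutate, show (b : ℤ) + N - 1 + 1 - N = b by ring, ← hb, sdiff_union_of_subset hsub]
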